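/- Let β ∈ (0,1), and let λ_k be positive reals with λ_k ≥ L₁·k^{(α+γ)/n} for k ≥ k₀, where α+γ > n. Then there exists a constant C > 0 (depending on β, α, γ, n, k₀, L₁) such that for all t > 0, Σ_{k=1}^∞ E_β(-λ_k t^β) ≤ C(1 + t^{-βn/(α+γ)}). -/

import Mathlib

/-!
For `0 < β ≤ 1` let `v(s) = s^(β-1) E_{β,β}(-sᵝ)`, the density `-(d/ds) E_β(-sᵝ)`.
Integrating the power series of `E_{β,β}` term by term against `(t-s)^(d-1)` (Beta integrals)
gives `∫₀ᵗ v = 1 - E_β(-tᵝ)`, `∫₀ᵗ (t-s)^(β-1) v = t^(β-1) - Γ(β) v(t)` and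
`∫₀ᵗ (t-s)ᵝ v = tᵝ - Γ(β+1) (1 - E_β(-tᵝ))`.

The second identity forbids `v` to change sign: zeros of the entire function `E_{β,β}` are
isolated, and if `v ≥ 0` on `(0, t₀]` and `v ≤ 0` on `(t₀, t)`, then, as `(t-s)^(β-1)` is at
most `(t/t₀)^(β-1) (t₀-s)^(β-1)`, the identity at `t` forces `v(t) ≥ 0`. Given `v ≥ 0`, the
third identity and `(t-s)ᵝ ≤ tᵝ` yield `E_β(-tᵝ) ≤ Γ(β+1) / (Γ(β+1) + tᵝ)`, while the same
identity at times `T → ∞`, with `Tᵝ ≤ tᵝ + (T-t)ᵝ`, yields `E_β(-tᵝ) ≥ 0`.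

Hence `E_β(-λ_k tᵝ) ≤ min(1, A k^(-p))` with `p = (α+γ)/n > 1` and `A = Γ(β+1)/(L₁ tᵝ)`.
Summing the bound `1` up to `k ≈ A^(1/p)` and comparing the rest with `∫ x^(-p) dx` gives
`O(1 + A^(1/p)) = O(1 + t^(-βn/(α+γ)))`.
-/

noncomputable def mittagLeffler (β x : ℝ) : ℝ :=
  ∑' j : ℕ, x ^ j / Real.Gamma (j * β + 1)

open MeasureTheory Set Real Filter Topology FormalMultilinearSeries

theorem rpow_mul_pow_rpow {s : ℝ} (hs : 0 < s) (β c : ℝ) (m : ℕ) :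
    s ^ c * (s ^ β) ^ m = s ^ (m * β + c) := by
  rw [← rpow_mul_natCast hs.le, ← rpow_add hs]
  ring_nf

theorem rpow_mul_exp_neg_le_Gamma {y R : ℝ} (hy : 1 ≤ y) (hR : 1 ≤ R) :
    R ^ (y - 1) * exp (-(R + 1)) ≤ Gamma y := by
  have hsub : Ioc R (R + 1) ⊆ Ioi 0 := fun x hx => by simp only [mem_Ioi]; linarith [hx.1]
  have hint : IntegrableOn (fun x => exp (-x) * x ^ (y - 1)) (Ioi 0) :=
    GammaIntegral_convergent (by linarith)
  rw [Gamma_eq_integral (by linarith)]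
  calc R ^ (y - 1) * exp (-(R + 1)) = ∫ _ in Ioc R (R + 1), R ^ (y - 1) * exp (-(R + 1)) := by
        simp
    _ ≤ ∫ x in Ioc R (R + 1), exp (-x) * x ^ (y - 1) := by
        refine setIntegral_mono_on (integrableOn_const (by simp)) (hint.mono_set hsub)
          measurableSet_Ioc fun x hx => ?_
        rw [mul_comm]
        gcongr <;> linarith [hx.1, hx.2]
    _ ≤ ∫ x in Ioi 0, exp (-x) * x ^ (y - 1) := by
        refine setIntegral_mono_set hint ?_ hsub.eventuallyLE
        filter_upwards [ae_restrict_mem measurableSet_Ioi] with x hx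
        exact mul_nonneg (exp_nonneg _) (rpow_nonneg (le_of_lt hx) _)

theorem summable_pow_div_Gamma {β : ℝ} (hβ : 0 < β) (b : ℝ) {r : ℝ} (hr : 0 ≤ r) :
    Summable fun m : ℕ => r ^ m / Gamma (m * β + b) := by
  set R := max 1 ((r + 1) ^ β⁻¹)
  have hR : 1 ≤ R := le_max_left _ _
  have hRβ : r < R ^ β := by
    calc r < ((r + 1) ^ β⁻¹) ^ β := by rw [rpow_inv_rpow (by linarith) hβ.ne']; linarith
      _ ≤ R ^ β := by gcongr; exact le_max_right _ _
  -- `Γ(mβ + b) ≥ R^{mβ+b-1} e^{-(R+1)}` once `mβ + b ≥ 1`, so the terms decay geometrically.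
  have hgeom : Summable fun m : ℕ => exp (R + 1) * R ^ (1 - b) * (r / R ^ β) ^ m :=
    (summable_geometric_of_lt_one (by positivity) ((div_lt_one (by positivity)).2 hRβ)).mul_left _
  refine Summable.of_norm_bounded_eventually hgeom ?_
  have hlarge : ∀ᶠ m : ℕ in atTop, 1 ≤ m * β + b :=
    (tendsto_atTop_add_const_right _ b
      (tendsto_natCast_atTop_atTop.atTop_mul_const hβ)).eventually_ge_atTop 1
  filter_upwards [Nat.cofinite_eq_atTop ▸ hlarge] with m hm
  have hΓ := rpow_mul_exp_neg_le_Gamma hm hR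
  have hΓpos : 0 < Gamma (m * β + b) := Gamma_pos_of_pos (by linarith)
  rw [norm_div, norm_pow, norm_of_nonneg hr, norm_of_nonneg hΓpos.le]
  calc r ^ m / Gamma (m * β + b) ≤ r ^ m / (R ^ (m * β + b - 1) * exp (-(R + 1))) :=
        div_le_div_of_nonneg_left (by positivity) (by positivity) hΓ
    _ = exp (R + 1) * R ^ (1 - b) * (r / R ^ β) ^ m := by
        rw [show m * β + b - 1 = m * β + (b - 1) by ring, ← rpow_mul_pow_rpow (by positivity),
          show 1 - b = -(b - 1) by ring, rpow_neg (by positivity), exp_neg, div_pow]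
        field_simp

/-- The two-parameter Mittag-Leffler function `E_{β,b}(x) = ∑ⱼ xʲ / Γ(jβ + b)`. -/
noncomputable def mittagLeffler₂ (β b : ℝ) : ℝ → ℝ :=
  ofScalarsSum fun j : ℕ => (Gamma (j * β + b))⁻¹

theorem mittagLeffler₂_zero (β b : ℝ) : mittagLeffler₂ β b 0 = (Gamma b)⁻¹ := by
  simp [mittagLeffler₂, ofScalarsSum_zero]

theorem mittagLeffler_eq_mittagLeffler₂ (β x : ℝ) : mittagLeffler β x = mittagLeffler₂ β 1 x := by
  simp [mittagLeffler, mittagLeffler₂, ofScalars_sum_eq, div_eq_inv_mul]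

section mittagLeffler₂

variable {β : ℝ} (hβ : 0 < β)
include hβ

theorem radius_ofScalars_inv_Gamma (b : ℝ) :
    (ofScalars ℝ fun j : ℕ => (Gamma (j * β + b))⁻¹).radius = ⊤ := by
  refine radius_eq_top_of_summable_norm _ fun r => ?_
  refine (summable_pow_div_Gamma hβ b r.coe_nonneg).norm.congr fun j => ?_
  rw [ofScalars_norm, norm_div, norm_inv, norm_pow, NNReal.norm_eq, div_eq_inv_mul]

theorem hasSum_mittagLeffler₂ (b x : ℝ) :
    HasSum (fun j : ℕ => x ^ j / Gamma (j * β + b)) (mittagLeffler₂ β b x) := by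
  have h := (ofScalars ℝ fun j : ℕ => (Gamma (j * β + b))⁻¹).hasSum (x := x)
    (by simp [radius_ofScalars_inv_Gamma hβ])
  rw [ofScalars_apply_eq'] at h
  simp only [smul_eq_mul, ← div_eq_inv_mul] at h
  exact h

theorem analyticAt_mittagLeffler₂ (b x : ℝ) : AnalyticAt ℝ (mittagLeffler₂ β b) x := by
  have := (ofScalars ℝ fun j : ℕ => (Gamma (j * β + b))⁻¹).hasFPowerSeriesOnBall
    (by simp [radius_ofScalars_inv_Gamma hβ])
  rw [radius_ofScalars_inv_Gamma hβ] at this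
  exact this.analyticAt_of_mem (by simp)

theorem continuous_mittagLeffler₂ (b : ℝ) : Continuous (mittagLeffler₂ β b) :=
  continuous_iff_continuousAt.2 fun x => (analyticAt_mittagLeffler₂ hβ b x).continuousAt

theorem mittagLeffler₂_eq_inv_Gamma_add_mul (b x : ℝ) :
    mittagLeffler₂ β b x = (Gamma b)⁻¹ + x * mittagLeffler₂ β (b + β) x := by
  have hshift := (hasSum_mittagLeffler₂ hβ (b + β) x).mul_left x
  have hterm : ∀ j : ℕ, x * (x ^ j / Gamma (j * β + (b + β))) =
      x ^ (j + 1) / Gamma ((j + 1 : ℕ) * β + b) := fun j => by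
    push_cast; ring_nf
  simp only [hterm] at hshift
  rw [(hasSum_mittagLeffler₂ hβ b x).unique ((hasSum_nat_add_iff 1).1 hshift)]
  simp [add_comm]

theorem eventually_mittagLeffler₂_neg_ne_zero {b : ℝ} (hb : 0 < b) (y₀ : ℝ) :
    ∀ᶠ y in 𝓝[≠] y₀, mittagLeffler₂ β b (-y) ≠ 0 := by
  have hg : AnalyticOnNhd ℝ (fun y => mittagLeffler₂ β b (-y)) univ := fun y _ =>
    (analyticAt_mittagLeffler₂ hβ b (-y)).comp analyticAt_id.neg
  refine (hg y₀ trivial).eventually_eq_zero_or_eventually_ne_zero.resolve_left fun h => ?_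
  have := hg.eqOn_zero_of_preconnected_of_eventuallyEq_zero isPreconnected_univ (mem_univ y₀) h
    (mem_univ 0)
  simp [mittagLeffler₂_zero, (Gamma_pos_of_pos hb).ne'] at this

end mittagLeffler₂

theorem integrableOn_rpow_mul_rpow_sub {a b t : ℝ} (ha : 0 < a) (hb : 0 < b) :
    IntegrableOn (fun s => s ^ (a - 1) * (t - s) ^ (b - 1)) (Ioo 0 t) := by
  rcases le_or_gt t 0 with ht | ht
  · simp [Ioo_eq_empty (not_lt.2 ht)]
  rw [← intervalIntegrable_iff_integrableOn_Ioo_of_le ht.le]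
  -- each factor is singular at one endpoint only, so split the interval at `t / 2`
  have hleft : IntervalIntegrable (fun s => (t - s) ^ (b - 1)) volume (t / 2) t := by
    have := (intervalIntegral.intervalIntegrable_rpow' (a := 0) (b := t / 2) (r := b - 1)
      (by linarith)).comp_sub_left t
    rw [sub_zero, sub_half] at this
    exact this.symm
  refine IntervalIntegrable.trans (b := t / 2) ?_ ?_
  · refine (intervalIntegral.intervalIntegrable_rpow' (by linarith)).mul_continuousOn ?_
    refine (continuousOn_const.sub continuousOn_id).rpow_const fun s hs => Or.inl ?_
    rw [uIcc_of_le (by linarith)] at hs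
    exact (sub_pos.2 (by linarith [hs.2] : s < t)).ne'
  · refine hleft.continuousOn_mul ?_
    refine continuousOn_id.rpow_const fun s hs => Or.inl ?_
    rw [uIcc_of_le (by linarith)] at hs
    exact (by linarith [hs.1] : (0 : ℝ) < s).ne'

theorem integral_rpow_mul_rpow_sub {a b t : ℝ} (ha : 0 < a) (hb : 0 < b) (ht : 0 < t) :
    ∫ s in Ioo 0 t, s ^ (a - 1) * (t - s) ^ (b - 1) =
      Gamma a * Gamma b / Gamma (a + b) * t ^ (a + b - 1) := by
  have hcpx : ∫ s in (0)..t, ((s ^ (a - 1) * (t - s) ^ (b - 1) : ℝ) : ℂ) =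
      ∫ s in (0)..t, (s : ℂ) ^ ((a : ℂ) - 1) * ((t : ℂ) - s) ^ ((b : ℂ) - 1) := by
    refine intervalIntegral.integral_congr fun s hs => ?_
    rw [uIcc_of_le ht.le] at hs
    push_cast
    rw [Complex.ofReal_cpow hs.1, Complex.ofReal_cpow (sub_nonneg.2 hs.2)]
    push_cast
    rfl
  rw [Complex.betaIntegral_scaled _ _ ht, Complex.betaIntegral_eq_Gamma_mul_div _ _ (by simpa)
    (by simpa), intervalIntegral.integral_ofReal] at hcpx
  rw [← integral_Ioc_eq_integral_Ioo, ← intervalIntegral.integral_of_le ht.le]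
  apply Complex.ofReal_injective
  rw [hcpx]
  push_cast
  rw [Complex.ofReal_cpow ht.le]
  push_cast [← Complex.Gamma_ofReal]
  ring

theorem integrableOn_rpow_sub_mul_mittagLeffler₂ {β b d t : ℝ} (hβ : 0 < β) (hb : 0 < b)
    (hd : 0 < d) :
    IntegrableOn (fun s => (t - s) ^ (d - 1) * (s ^ (b - 1) * mittagLeffler₂ β b (-s ^ β)))
      (Ioo 0 t) := by
  obtain ⟨M, hM⟩ := (isCompact_Icc (a := -t ^ β) (b := 0)).exists_bound_of_continuousOn
    (continuous_mittagLeffler₂ hβ b).continuousOn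
  have hmeas : Measurable fun s =>
      (t - s) ^ (d - 1) * (s ^ (b - 1) * mittagLeffler₂ β b (-s ^ β)) :=
    ((measurable_const.sub measurable_id).pow_const _).mul ((measurable_id.pow_const _).mul
      ((continuous_mittagLeffler₂ hβ b).measurable.comp (measurable_id.pow_const β).neg))
  refine ((integrableOn_rpow_mul_rpow_sub hb hd).const_mul M).mono' hmeas.aestronglyMeasurable ?_
  filter_upwards [ae_restrict_mem measurableSet_Ioo] with s hs
  have hE : ‖mittagLeffler₂ β b (-s ^ β)‖ ≤ M :=
    hM _ ⟨neg_le_neg (rpow_le_rpow hs.1.le hs.2.le hβ.le), neg_nonpos.2 (rpow_nonneg hs.1.le _)⟩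
  have hts : 0 ≤ (t - s) ^ (d - 1) := rpow_nonneg (sub_pos.2 hs.2).le _
  have hs' : 0 ≤ s ^ (b - 1) := rpow_nonneg hs.1.le _
  rw [norm_mul, norm_mul, norm_of_nonneg hts, norm_of_nonneg hs']
  calc (t - s) ^ (d - 1) * (s ^ (b - 1) * ‖mittagLeffler₂ β b (-s ^ β)‖)
      ≤ (t - s) ^ (d - 1) * (s ^ (b - 1) * M) := by gcongr
    _ = M * (s ^ (b - 1) * (t - s) ^ (d - 1)) := by ring

theorem integral_rpow_sub_mul_mittagLeffler₂ {β b d t : ℝ} (hβ : 0 < β) (hb : 0 < b)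
    (hd : 0 < d) (ht : 0 < t) :
    ∫ s in Ioo 0 t, (t - s) ^ (d - 1) * (s ^ (b - 1) * mittagLeffler₂ β b (-s ^ β)) =
      Gamma d * t ^ (b + d - 1) * mittagLeffler₂ β (b + d) (-t ^ β) := by
  set P : ℕ → ℝ → ℝ := fun m s => s ^ (m * β + b - 1) * (t - s) ^ (d - 1) / Gamma (m * β + b)
  have hP_int : ∀ m : ℕ, IntegrableOn (P m) (Ioo 0 t) := fun m =>
    (integrableOn_rpow_mul_rpow_sub (by positivity) hd).div_const _
  -- each term of the series is a Beta integral
  have hP : ∀ m : ℕ, ∫ s in Ioo 0 t, P m s =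
      Gamma d * t ^ (b + d - 1) * ((t ^ β) ^ m / Gamma (m * β + (b + d))) := by
    intro m
    have hΓ : Gamma (m * β + b) ≠ 0 := (Gamma_pos_of_pos (by positivity)).ne'
    have ht' : t ^ (b + d - 1) * (t ^ β) ^ m = t ^ (m * β + b + d - 1) := by
      rw [rpow_mul_pow_rpow ht]; ring_nf
    rw [integral_div, integral_rpow_mul_rpow_sub (by positivity) hd ht, ← add_assoc, ← ht']
    field_simp
  have hnorm : ∀ m : ℕ, ∫ s in Ioo 0 t, ‖(-1) ^ m * P m s‖ = ∫ s in Ioo 0 t, P m s := by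
    refine fun m => setIntegral_congr_fun measurableSet_Ioo fun s hs => ?_
    have hΓ : 0 < Gamma (m * β + b) := Gamma_pos_of_pos (by positivity)
    have hts : 0 ≤ (t - s) ^ (d - 1) := rpow_nonneg (sub_pos.2 hs.2).le _
    rw [norm_mul, norm_pow, norm_neg, norm_one, one_pow, one_mul,
      norm_of_nonneg (div_nonneg (mul_nonneg (rpow_nonneg hs.1.le _) hts) hΓ.le)]
  have hsum : Summable fun m : ℕ => ∫ s in Ioo 0 t, ‖(-1) ^ m * P m s‖ := by
    simp_rw [hnorm, hP]
    exact (summable_pow_div_Gamma hβ _ (by positivity)).mul_left _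
  have hseries : ∀ s ∈ Ioo 0 t,
      (t - s) ^ (d - 1) * (s ^ (b - 1) * mittagLeffler₂ β b (-s ^ β)) =
        ∑' m : ℕ, (-1) ^ m * P m s := by
    intro s hs
    rw [← (hasSum_mittagLeffler₂ hβ b (-s ^ β)).tsum_eq, ← tsum_mul_left, ← tsum_mul_left]
    refine tsum_congr fun m => ?_
    simp only [P]
    rw [neg_pow, show (m : ℝ) * β + b - 1 = m * β + (b - 1) by ring, ← rpow_mul_pow_rpow hs.1]
    ring
  rw [setIntegral_congr_fun measurableSet_Ioo hseries,
    ← integral_tsum_of_summable_integral_norm (fun m => (hP_int m).const_mul _) hsum,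
    ← (hasSum_mittagLeffler₂ hβ (b + d) (-t ^ β)).tsum_eq, ← tsum_mul_left]
  refine tsum_congr fun m => ?_
  rw [integral_const_mul, hP, neg_pow]
  ring

/-- The density `-(d/ds) E_β(-sᵝ)`, see `integral_mlDensity`. -/
noncomputable def mlDensity (β s : ℝ) : ℝ :=
  s ^ (β - 1) * mittagLeffler₂ β β (-s ^ β)

section mlDensity

variable {β : ℝ} (hβ : 0 < β)
include hβ

theorem integrableOn_rpow_sub_mul_mlDensity {d t : ℝ} (hd : 0 < d) :
    IntegrableOn (fun s => (t - s) ^ (d - 1) * mlDensity β s) (Ioo 0 t) :=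
  integrableOn_rpow_sub_mul_mittagLeffler₂ hβ hβ hd

theorem integrableOn_mlDensity (t : ℝ) : IntegrableOn (mlDensity β) (Ioo 0 t) := by
  simpa using integrableOn_rpow_sub_mul_mlDensity hβ (t := t) one_pos

theorem integrableOn_rpow_sub_mul_mlDensity' (T : ℝ) :
    IntegrableOn (fun s => (T - s) ^ β * mlDensity β s) (Ioo 0 T) := by
  simpa using integrableOn_rpow_sub_mul_mlDensity hβ (t := T) (d := β + 1) (by positivity)

theorem integral_mlDensity {t : ℝ} (ht : 0 < t) :
    ∫ s in Ioo 0 t, mlDensity β s = 1 - mittagLeffler β (-t ^ β) := by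
  have h := integral_rpow_sub_mul_mittagLeffler₂ hβ hβ one_pos ht
  simp only [sub_self, rpow_zero, one_mul, Gamma_one, add_sub_cancel_right] at h
  rw [mittagLeffler_eq_mittagLeffler₂ β, mittagLeffler₂_eq_inv_Gamma_add_mul hβ, Gamma_one,
    add_comm 1 β]
  exact h.trans (by ring)

theorem integral_rpow_sub_sub_one_mul_mlDensity {t : ℝ} (ht : 0 < t) :
    ∫ s in Ioo 0 t, (t - s) ^ (β - 1) * mlDensity β s = t ^ (β - 1) - Gamma β * mlDensity β t := by
  have hΓ : Gamma β ≠ 0 := (Gamma_pos_of_pos hβ).ne'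
  rw [mlDensity, mittagLeffler₂_eq_inv_Gamma_add_mul hβ β]
  refine (integral_rpow_sub_mul_mittagLeffler₂ hβ hβ hβ ht).trans ?_
  rw [show β + β - 1 = (β - 1) + β by ring, rpow_add ht]
  field_simp
  ring

theorem integral_rpow_sub_mul_mlDensity {t : ℝ} (ht : 0 < t) :
    ∫ s in Ioo 0 t, (t - s) ^ β * mlDensity β s =
      t ^ β - Gamma (β + 1) * (1 - mittagLeffler β (-t ^ β)) := by
  have hΓ : Gamma (β + 1) ≠ 0 := (Gamma_pos_of_pos (by positivity)).ne'
  have h := integral_rpow_sub_mul_mittagLeffler₂ hβ hβ (d := β + 1) (by positivity) ht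
  rw [add_sub_cancel_right, show β + (β + 1) = β + 1 + β by ring,
    show β + 1 + β - 1 = β + β by ring, rpow_add ht] at h
  rw [mittagLeffler_eq_mittagLeffler₂ β, mittagLeffler₂_eq_inv_Gamma_add_mul hβ,
    mittagLeffler₂_eq_inv_Gamma_add_mul hβ (1 + β), Gamma_one, add_comm 1 β]
  refine h.trans ?_
  field_simp
  ring

end mlDensity

theorem exists_first_sign_change {g : ℝ → ℝ} (hg : Continuous g) (hg0 : 0 < g 0)
    (hzero : ∀ y, ∀ᶠ x in 𝓝[≠] y, g x ≠ 0) {y : ℝ} (hy : 0 ≤ y) (hneg : g y < 0) :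
    ∃ y₀ y₂, 0 < y₀ ∧ y₀ < y₂ ∧ (∀ x ∈ Icc 0 y₀, 0 ≤ g x) ∧ (∀ x ∈ Ioo y₀ y₂, g x ≤ 0) ∧
      g y₂ < 0 := by
  set S := {x | 0 ≤ x ∧ g x < 0}
  have hSne : S.Nonempty := ⟨y, hy, hneg⟩
  have hSbdd : BddBelow S := ⟨0, fun _ hx => hx.1⟩
  set y₀ := sInf S
  have hy₀ : 0 ≤ y₀ ∧ g y₀ ≤ 0 :=
    ((isClosed_le continuous_const continuous_id).inter (isClosed_le hg continuous_const)
      ).closure_subset_iff.2 (fun x hx => ⟨hx.1, hx.2.le⟩) (csInf_mem_closure hSne hSbdd)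
  have hy₀pos : 0 < y₀ := hy₀.1.lt_of_ne fun h => by rw [← h] at hy₀; linarith [hy₀.2]
  have hbelow : ∀ x ∈ Icc 0 y₀, 0 ≤ g x := by
    have hIco : ∀ x ∈ Ico 0 y₀, 0 ≤ g x := fun x hx =>
      not_lt.1 fun hlt => (csInf_le hSbdd ⟨hx.1, hlt⟩).not_gt hx.2
    rw [← closure_Ico hy₀pos.ne]
    exact fun x hx => closure_minimal hIco (isClosed_le continuous_const hg) hx
  obtain ⟨u, hu, hne⟩ := mem_nhdsGT_iff_exists_Ioo_subset.1
    (nhdsWithin_mono y₀ (fun x hx => ne_of_gt hx) (hzero y₀))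
  obtain ⟨y₂, hy₂S, hy₂u⟩ := (csInf_lt_iff hSbdd hSne).1 hu
  have hy₀y₂ : y₀ < y₂ := (csInf_le hSbdd hy₂S).lt_of_ne fun h => by
    linarith [hbelow y₀ (right_mem_Icc.2 hy₀.1), h ▸ hy₂S.2]
  refine ⟨y₀, y₂, hy₀pos, hy₀y₂, hbelow, fun x hx => ?_, hy₂S.2⟩
  by_contra! hpos
  obtain ⟨z, hz, hgz⟩ := intermediate_value_Icc' hx.2.le hg.continuousOn ⟨hy₂S.2.le, hpos.le⟩
  exact hne ⟨hx.1.trans_le hz.1, hz.2.trans_lt hy₂u⟩ hgz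

section positivity

variable {β : ℝ} (hβ : 0 < β) (hβ1 : β ≤ 1)
include hβ hβ1

theorem integral_Ioc_rpow_sub_sub_one_mul_mlDensity_le {t₀ t : ℝ} (ht₀ : 0 < t₀) (ht : t₀ < t)
    (hpos : ∀ s ∈ Ioc 0 t₀, 0 ≤ mlDensity β s) :
    ∫ s in Ioc 0 t₀, (t - s) ^ (β - 1) * mlDensity β s ≤ t ^ (β - 1) := by
  have htt₀ : 0 < t / t₀ := div_pos (ht₀.trans ht) ht₀
  set c := (t / t₀) ^ (β - 1)
  have hc : 0 < c := rpow_pos_of_pos htt₀ _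
  rw [integral_Ioc_eq_integral_Ioo]
  -- `(t - s)^(β-1) ≤ c (t₀ - s)^(β-1)`, as `β ≤ 1` and `t - s ≥ (t/t₀)(t₀ - s)`
  calc ∫ s in Ioo 0 t₀, (t - s) ^ (β - 1) * mlDensity β s
      ≤ ∫ s in Ioo 0 t₀, c * ((t₀ - s) ^ (β - 1) * mlDensity β s) := by
        refine setIntegral_mono_on ((integrableOn_rpow_sub_mul_mlDensity hβ hβ).mono_set
          (Ioo_subset_Ioo_right ht.le)) ((integrableOn_rpow_sub_mul_mlDensity hβ hβ).const_mul c)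
          measurableSet_Ioo fun s hs => ?_
        have hts : t / t₀ * (t₀ - s) ≤ t - s := by
          have : 1 ≤ t / t₀ := (one_le_div ht₀).2 ht.le
          rw [mul_sub, div_mul_cancel₀ _ ht₀.ne']
          nlinarith [hs.1]
        rw [← mul_assoc, ← mul_rpow htt₀.le (sub_pos.2 hs.2).le]
        exact mul_le_mul_of_nonneg_right (rpow_le_rpow_of_nonpos
          (mul_pos htt₀ (sub_pos.2 hs.2)) hts (by linarith)) (hpos s ⟨hs.1, hs.2.le⟩)
    _ = c * (t₀ ^ (β - 1) - Gamma β * mlDensity β t₀) := by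
        rw [integral_const_mul, integral_rpow_sub_sub_one_mul_mlDensity hβ ht₀]
    _ ≤ c * t₀ ^ (β - 1) := by
        have := mul_nonneg (Gamma_pos_of_pos hβ).le (hpos t₀ ⟨ht₀, le_rfl⟩)
        gcongr
        linarith
    _ = t ^ (β - 1) := by rw [← mul_rpow htt₀.le ht₀.le, div_mul_cancel₀ _ ht₀.ne']

theorem mlDensity_nonneg_of_nonneg_of_nonpos {t₀ t : ℝ} (ht₀ : 0 < t₀) (ht : t₀ < t)
    (hpos : ∀ s ∈ Ioc 0 t₀, 0 ≤ mlDensity β s) (hneg : ∀ s ∈ Ioo t₀ t, mlDensity β s ≤ 0) :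
    0 ≤ mlDensity β t := by
  have hg := integrableOn_rpow_sub_mul_mlDensity hβ (t := t) hβ
  have hright : ∫ s in Ioo t₀ t, (t - s) ^ (β - 1) * mlDensity β s ≤ 0 :=
    setIntegral_nonpos measurableSet_Ioo fun s hs =>
      mul_nonpos_of_nonneg_of_nonpos (rpow_nonneg (sub_pos.2 hs.2).le _) (hneg s hs)
  have hsplit := integral_rpow_sub_sub_one_mul_mlDensity hβ (ht₀.trans ht)
  rw [← Ioc_union_Ioo_eq_Ioo ht₀.le ht, setIntegral_union
    (disjoint_left.2 fun _ hx hx' => hx'.1.not_ge hx.2) measurableSet_Ioo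
    (hg.mono_set (Ioc_subset_Ioo_right ht)) (hg.mono_set (Ioo_subset_Ioo_left ht₀.le))] at hsplit
  have hleft := integral_Ioc_rpow_sub_sub_one_mul_mlDensity_le hβ hβ1 ht₀ ht hpos
  exact nonneg_of_mul_nonneg_right (by linarith) (Gamma_pos_of_pos hβ)

theorem mittagLeffler₂_neg_nonneg {y : ℝ} (hy : 0 ≤ y) : 0 ≤ mittagLeffler₂ β β (-y) := by
  by_contra! hneg
  obtain ⟨y₀, y₂, hy₀, hy₀₂, hbelow, hbetween, hy₂neg⟩ :=
    exists_first_sign_change ((continuous_mittagLeffler₂ hβ β).comp continuous_neg)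
      (by simp [mittagLeffler₂_zero, Gamma_pos_of_pos hβ])
      (eventually_mittagLeffler₂_neg_ne_zero hβ hβ) hy hneg
  have hy₂ : 0 ≤ y₂ := (hy₀.trans hy₀₂).le
  -- pass to the time variable `s = y^{1/β}`
  have hpow : ∀ {x : ℝ}, 0 ≤ x → (x ^ β⁻¹) ^ β = x := fun hx => rpow_inv_rpow hx hβ.ne'
  have hdens := mlDensity_nonneg_of_nonneg_of_nonpos hβ hβ1 (t₀ := y₀ ^ β⁻¹) (t := y₂ ^ β⁻¹)
    (rpow_pos_of_pos hy₀ _) (rpow_lt_rpow hy₀.le hy₀₂ (inv_pos.2 hβ)) (fun s hs => ?_)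
    (fun s hs => ?_)
  · rw [mlDensity, hpow hy₂] at hdens
    exact hy₂neg.not_ge (nonneg_of_mul_nonneg_right hdens
      (rpow_pos_of_pos (rpow_pos_of_pos (hy₀.trans hy₀₂) _) _))
  · refine mul_nonneg (rpow_nonneg hs.1.le _) (hbelow _ ⟨rpow_nonneg hs.1.le _, ?_⟩)
    simpa [hpow hy₀.le] using rpow_le_rpow hs.1.le hs.2 hβ.le
  · have hs0 : 0 < s := (rpow_pos_of_pos hy₀ _).trans hs.1
    refine mul_nonpos_of_nonneg_of_nonpos (rpow_nonneg hs0.le _) (hbetween _ ⟨?_, ?_⟩)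
    · simpa [hpow hy₀.le] using rpow_lt_rpow (rpow_nonneg hy₀.le _) hs.1 hβ
    · simpa [hpow hy₂] using rpow_lt_rpow hs0.le hs.2 hβ

theorem mlDensity_nonneg {s : ℝ} (hs : 0 < s) : 0 ≤ mlDensity β s :=
  mul_nonneg (rpow_nonneg hs.le _) (mittagLeffler₂_neg_nonneg hβ hβ1 (rpow_nonneg hs.le _))

theorem mittagLeffler_neg_rpow_le {t : ℝ} (ht : 0 < t) :
    mittagLeffler β (-t ^ β) ≤ Gamma (β + 1) / (Gamma (β + 1) + t ^ β) := by
  have h : ∫ s in Ioo 0 t, (t - s) ^ β * mlDensity β s ≤ t ^ β * ∫ s in Ioo 0 t, mlDensity β s := by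
    rw [← integral_const_mul]
    refine setIntegral_mono_on (integrableOn_rpow_sub_mul_mlDensity' hβ t)
      ((integrableOn_mlDensity hβ t).const_mul _) measurableSet_Ioo fun s hs => ?_
    exact mul_le_mul_of_nonneg_right (rpow_le_rpow (sub_pos.2 hs.2).le (by linarith [hs.1]) hβ.le)
      (mlDensity_nonneg hβ hβ1 hs.1)
  rw [integral_rpow_sub_mul_mlDensity hβ ht, integral_mlDensity hβ ht] at h
  rw [le_div_iff₀ (by positivity)]
  linarith

theorem rpow_add_rpow_sub_mul_mittagLeffler_nonneg {t T : ℝ} (ht : 0 < t) (hT : t < T) :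
    0 ≤ t ^ β + (T - t) ^ β * mittagLeffler β (-t ^ β) := by
  -- `0 ≤ Γ(β+1) ∫₀ᵀ v = Tᵝ - ∫₀ᵀ (T-s)ᵝ v ≤ Tᵝ - (T-t)ᵝ ∫₀ᵗ v ≤ tᵝ + (T-t)ᵝ E_β(-tᵝ)`
  have hT0 : 0 < T := ht.trans hT
  have hv : ∀ s ∈ Ioo 0 T, 0 ≤ (T - s) ^ β * mlDensity β s := fun s hs =>
    mul_nonneg (rpow_nonneg (by linarith [hs.2]) _) (mlDensity_nonneg hβ hβ1 hs.1)
  have hlow : (T - t) ^ β * (1 - mittagLeffler β (-t ^ β)) ≤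
      ∫ s in Ioo 0 T, (T - s) ^ β * mlDensity β s :=
    calc (T - t) ^ β * (1 - mittagLeffler β (-t ^ β))
        = ∫ s in Ioo 0 t, (T - t) ^ β * mlDensity β s := by
          rw [integral_const_mul, integral_mlDensity hβ ht]
      _ ≤ ∫ s in Ioo 0 t, (T - s) ^ β * mlDensity β s :=
          setIntegral_mono_on ((integrableOn_mlDensity hβ t).const_mul _)
            ((integrableOn_rpow_sub_mul_mlDensity' hβ T).mono_set (Ioo_subset_Ioo_right hT.le))
            measurableSet_Ioo fun s hs => mul_le_mul_of_nonneg_right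
              (rpow_le_rpow (by linarith) (by linarith [hs.2]) hβ.le) (mlDensity_nonneg hβ hβ1 hs.1)
      _ ≤ ∫ s in Ioo 0 T, (T - s) ^ β * mlDensity β s :=
          setIntegral_mono_set (integrableOn_rpow_sub_mul_mlDensity' hβ T)
            ((ae_restrict_mem measurableSet_Ioo).mono hv) (Ioo_subset_Ioo_right hT.le).eventuallyLE
  have hsub : T ^ β ≤ t ^ β + (T - t) ^ β := by
    simpa using rpow_add_le_add_rpow ht.le (sub_pos.2 hT).le hβ.le hβ1
  have hw : 0 ≤ ∫ s in Ioo 0 T, mlDensity β s :=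
    setIntegral_nonneg measurableSet_Ioo fun s hs => mlDensity_nonneg hβ hβ1 hs.1
  have hΓw := mul_nonneg (Gamma_pos_of_pos (by linarith : 0 < β + 1)).le hw
  rw [integral_mlDensity hβ hT0] at hΓw
  linarith [integral_rpow_sub_mul_mlDensity hβ hT0]

theorem mittagLeffler_neg_rpow_nonneg {t : ℝ} (ht : 0 < t) : 0 ≤ mittagLeffler β (-t ^ β) := by
  set E := mittagLeffler β (-t ^ β)
  by_contra! hE
  have htE : 0 < t ^ β / -E := div_pos (rpow_pos_of_pos ht β) (neg_pos.2 hE)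
  -- take `T = t + u` with `uᵝ = tᵝ / (-E) + 1`, which turns the bound into `0 ≤ E`
  have hu := rpow_add_rpow_sub_mul_mittagLeffler_nonneg hβ hβ1 ht
    (lt_add_of_pos_right t (rpow_pos_of_pos (by linarith : 0 < t ^ β / -E + 1) β⁻¹))
  rw [add_sub_cancel_left, rpow_inv_rpow (by linarith) hβ.ne'] at hu
  have : t ^ β + (t ^ β / -E + 1) * E = E := by field_simp [hE.ne]; ring
  linarith

theorem mittagLeffler_neg_nonneg {x : ℝ} (hx : 0 < x) : 0 ≤ mittagLeffler β (-x) := by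
  simpa [rpow_inv_rpow hx.le hβ.ne'] using
    mittagLeffler_neg_rpow_nonneg hβ hβ1 (rpow_pos_of_pos hx β⁻¹)

theorem mittagLeffler_neg_le {x : ℝ} (hx : 0 < x) :
    mittagLeffler β (-x) ≤ Gamma (β + 1) / (Gamma (β + 1) + x) := by
  simpa [rpow_inv_rpow hx.le hβ.ne'] using
    mittagLeffler_neg_rpow_le hβ hβ1 (rpow_pos_of_pos hx β⁻¹)

theorem mittagLeffler_neg_le_one {x : ℝ} (hx : 0 < x) : mittagLeffler β (-x) ≤ 1 :=
  (mittagLeffler_neg_le hβ hβ1 hx).trans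
    ((div_le_one (by positivity)).2 (le_add_of_nonneg_right hx.le))

theorem mittagLeffler_neg_le_div {x : ℝ} (hx : 0 < x) :
    mittagLeffler β (-x) ≤ Gamma (β + 1) / x :=
  (mittagLeffler_neg_le hβ hβ1 hx).trans
    (div_le_div_of_nonneg_left (by positivity) hx (le_add_of_nonneg_left (by positivity)))

theorem mittagLeffler_neg_mul_rpow_le {L lam t k p : ℝ} (hL : 0 < L) (ht : 0 < t) (hk : 0 < k)
    (hlam : L * k ^ p ≤ lam) :
    mittagLeffler β (-(lam * t ^ β)) ≤ Gamma (β + 1) / (L * t ^ β) * k ^ (-p) := by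
  have htβ : 0 < t ^ β := rpow_pos_of_pos ht β
  calc mittagLeffler β (-(lam * t ^ β)) ≤ Gamma (β + 1) / (lam * t ^ β) :=
        mittagLeffler_neg_le_div hβ hβ1
          (mul_pos ((by positivity : 0 < L * k ^ p).trans_le hlam) htβ)
    _ ≤ Gamma (β + 1) / (L * k ^ p * t ^ β) := div_le_div_of_nonneg_left
        (Gamma_pos_of_pos (by linarith)).le (by positivity) (mul_le_mul_of_nonneg_right hlam htβ.le)
    _ = Gamma (β + 1) / (L * t ^ β) * k ^ (-p) := by rw [rpow_neg hk.le]; field_simp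

end positivity

theorem tsum_rpow_neg_le {p x₀ : ℝ} (hp : 1 < p) (hx₀ : 0 < x₀) :
    ∑' i : ℕ, (x₀ + (i + 1 : ℕ)) ^ (-p) ≤ x₀ ^ (1 - p) / (p - 1) := by
  refine Real.tsum_le_of_sum_range_le (fun i => rpow_nonneg (by positivity) _) fun n => ?_
  have hanti : AntitoneOn (fun x : ℝ => x ^ (-p)) (Icc x₀ (x₀ + n)) := fun x hx y _ hxy =>
    rpow_le_rpow_of_nonpos (hx₀.trans_le hx.1) hxy (by linarith)
  have hx₀n : 0 ≤ (x₀ + n) ^ (1 - p) := rpow_nonneg (by positivity) _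
  calc ∑ i ∈ Finset.range n, (x₀ + (i + 1 : ℕ)) ^ (-p)
      ≤ ∫ x in x₀..x₀ + n, x ^ (-p) := hanti.sum_le_integral
    _ = (x₀ ^ (1 - p) - (x₀ + n) ^ (1 - p)) / (p - 1) := by
        rw [integral_rpow (Or.inr ⟨by linarith, fun h => by
          rw [uIcc_of_le (le_add_of_nonneg_right n.cast_nonneg)] at h; linarith [h.1]⟩),
          div_eq_div_iff (by linarith) (by linarith)]
        ring_nf
    _ ≤ x₀ ^ (1 - p) / (p - 1) := by gcongr; linarith

theorem tsum_mul_rpow_neg_nat_add_le {A p : ℝ} (hp : 1 < p) (hA : 0 < A) {N : ℕ}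
    (hN : A ^ p⁻¹ ≤ N) :
    ∑' i : ℕ, A * ((i + (N + 1) : ℕ) : ℝ) ^ (-p) ≤ A ^ p⁻¹ / (p - 1) := by
  have ha : 0 < A ^ p⁻¹ := rpow_pos_of_pos hA _
  have hA_a : A * (A ^ p⁻¹) ^ (1 - p) = A ^ p⁻¹ := by
    have he : 1 + p⁻¹ * (1 - p) = p⁻¹ := by field_simp; ring
    rw [← rpow_mul hA.le, ← rpow_one_add' hA.le (by rw [he]; exact inv_ne_zero (by linarith)), he]
  calc ∑' i : ℕ, A * ((i + (N + 1) : ℕ) : ℝ) ^ (-p)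
      = A * ∑' i : ℕ, ((N : ℝ) + (i + 1 : ℕ)) ^ (-p) := by
        rw [tsum_mul_left]
        congr 2 with i
        push_cast
        ring_nf
    _ ≤ A * (N ^ (1 - p) / (p - 1)) := by
        gcongr
        exact tsum_rpow_neg_le hp (ha.trans_le hN)
    _ ≤ A * ((A ^ p⁻¹) ^ (1 - p) / (p - 1)) :=
        mul_le_mul_of_nonneg_left (div_le_div_of_nonneg_right
          (rpow_le_rpow_of_nonpos ha hN (by linarith)) (by linarith)) hA.le
    _ = A ^ p⁻¹ / (p - 1) := by rw [← mul_div_assoc, hA_a]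

theorem tsum_le_of_le_one_of_le_mul_rpow_neg {f : ℕ → ℝ} {A p : ℝ} (k₀ : ℕ) (hp : 1 < p)
    (hA : 0 < A) (hf₀ : ∀ k, 0 ≤ f k) (hf₁ : ∀ k, f k ≤ 1)
    (hdecay : ∀ k, k₀ ≤ k → f k ≤ A * (k : ℝ) ^ (-p)) :
    ∑' k, f k ≤ k₀ + 2 + p / (p - 1) * A ^ p⁻¹ := by
  set a := A ^ p⁻¹
  -- split the sum at `N + 1`: the bound `A k^(-p)` beats the bound `1` only for `k > a`
  set N := k₀ + ⌈a⌉₊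
  have hN : a ≤ N := by
    simp only [N, Nat.cast_add]
    linarith [Nat.le_ceil a, (Nat.cast_nonneg k₀ : (0 : ℝ) ≤ k₀)]
  have hN' : (N : ℝ) ≤ k₀ + 1 + a := by
    simp only [N, Nat.cast_add]
    linarith [Nat.ceil_lt_add_one (rpow_pos_of_pos hA p⁻¹).le]
  have htail : ∀ i : ℕ, f (i + (N + 1)) ≤ A * ((i + (N + 1) : ℕ) : ℝ) ^ (-p) := fun i =>
    hdecay _ (by omega)
  have hsum_tail : Summable fun i : ℕ => A * ((i + (N + 1) : ℕ) : ℝ) ^ (-p) :=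
    ((summable_nat_add_iff (N + 1)).2 (Real.summable_nat_rpow.2 (by linarith))).mul_left A
  have hf_tail : Summable fun i => f (i + (N + 1)) :=
    hsum_tail.of_nonneg_of_le (fun i => hf₀ _) htail
  have hhead : ∑ i ∈ Finset.range (N + 1), f i ≤ N + 1 := by
    simpa using Finset.sum_le_sum fun i (_ : i ∈ Finset.range (N + 1)) => hf₁ i
  have htail_sum : ∑' i, f (i + (N + 1)) ≤ a / (p - 1) :=
    (hf_tail.tsum_le_tsum htail hsum_tail).trans (tsum_mul_rpow_neg_nat_add_le hp hA hN)
  rw [← Summable.sum_add_tsum_nat_add (N + 1) ((summable_nat_add_iff (N + 1)).1 hf_tail)]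
  have : p / (p - 1) * a = a + a / (p - 1) := by field_simp [(by linarith : p - 1 ≠ 0)]; ring
  linarith

theorem tsum_mittagLeffler_bound (β α γ L₁ : ℝ) (n k₀ : ℕ)
    (hn : 1 ≤ n) (hβ : β ∈ Set.Ioo (0 : ℝ) 1) (hL : 0 < L₁) (h : (n : ℝ) < α + γ)
    (lam : ℕ → ℝ) (hpos : ∀ k, 0 < lam k)
    (hgrow : ∀ k, k₀ ≤ k → L₁ * (k : ℝ) ^ ((α + γ) / (n : ℝ)) ≤ lam k) :
    ∃ C : ℝ, 0 < C ∧ ∀ t : ℝ, 0 < t →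
      (∑' k : ℕ, mittagLeffler β (-(lam k * t ^ β))) ≤
        C * (1 + t ^ (-(β * (n : ℝ)) / (α + γ))) := by
  obtain ⟨hβ0, hβ1⟩ := hβ
  have hn0 : (0 : ℝ) < n := by exact_mod_cast hn
  set p := (α + γ) / n
  have hp : 1 < p := (one_lt_div hn0).2 h
  set G := Gamma (β + 1)
  set c := p / (p - 1) * (G / L₁) ^ p⁻¹
  have hc : 0 ≤ c := mul_nonneg (div_pos (by linarith) (by linarith)).le
    (rpow_nonneg (div_pos (Gamma_pos_of_pos (by linarith)) hL).le _)
  refine ⟨k₀ + 3 + c, by positivity, fun t ht => ?_⟩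
  set τ := t ^ (-(β * n) / (α + γ))
  have hτ : 0 ≤ τ := by positivity
  have hx : ∀ k, 0 < lam k * t ^ β := fun k => mul_pos (hpos k) (rpow_pos_of_pos ht β)
  have hscale : (G / (L₁ * t ^ β)) ^ p⁻¹ = (G / L₁) ^ p⁻¹ * τ := by
    rw [div_mul_eq_div_div, div_eq_mul_inv _ (t ^ β), ← rpow_neg ht.le,
      mul_rpow (div_pos (Gamma_pos_of_pos (by linarith)) hL).le (by positivity), ← rpow_mul ht.le]
    congr 2
    simp only [p]
    field_simp [(by linarith : α + γ ≠ 0)]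
  calc ∑' k, mittagLeffler β (-(lam k * t ^ β))
      ≤ ↑(k₀ + 1) + 2 + p / (p - 1) * (G / (L₁ * t ^ β)) ^ p⁻¹ :=
        tsum_le_of_le_one_of_le_mul_rpow_neg (k₀ + 1) hp (by positivity)
          (fun k => mittagLeffler_neg_nonneg hβ0 hβ1.le (hx k))
          (fun k => mittagLeffler_neg_le_one hβ0 hβ1.le (hx k))
          (fun k hk => mittagLeffler_neg_mul_rpow_le hβ0 hβ1.le hL ht (Nat.cast_pos.2 (by omega))
            (hgrow k (by omega)))
    _ = k₀ + 3 + c * τ := by rw [hscale]; push_cast; ring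
    _ ≤ (k₀ + 3 + c) * (1 + τ) := by nlinarith
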